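/- Let I be a type, R = MvPolynomial (I ⊕ I) ℚ with 'position' variables x_i = X(inl i) and 'momentum' variables p_i = X(inr i), and define the Poisson bracket {f,g} = Σ_{i∈I} (∂f/∂x_i)(∂g/∂p_i) − (∂f/∂p_i)(∂g/∂x_i) (with I finite, or f,g polynomials so the sum is finite). Let A, B ⊆ I be disjoint subsets and let Γ belong to the ℚ-subalgebra generated by {x_i : i ∈ A} ∪ {p_j : j ∈ B}. Then for every coordinate variable v ∈ {x_k, p_k : k ∈ I}, one has {{v, Γ}, Γ} = 0; consequently exp(γ{·,Γ}) applied to any coordinate equals v + γ{v,Γ}, i.e. the canonical transformation of the coordinates is first order in γ. -/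
import Mathlib

open MvPolynomial

private lemma pderiv_comm' {σ : Type*} [DecidableEq σ] (a b : σ)
    (g : MvPolynomial σ ℚ) :
    pderiv a (pderiv b g) = pderiv b (pderiv a g) := by
  have hconst : ∀ c d n : σ, pderiv c (pderiv d (X n : MvPolynomial σ ℚ)) = 0 := by
    intro c d n
    rcases em (n = d) with rfl | h
    · rw [pderiv_X_self]; exact pderiv_one
    · rw [pderiv_X_of_ne h, map_zero]
  induction g using MvPolynomial.induction_on with
  | C c => simp [pderiv_C]
  | add p q hp hq => simp [hp, hq]
  | mul_X p n hp =>
    simp only [pderiv_mul, map_add, hconst, hp, mul_zero, add_zero]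
    ring

/-- For a generator Γ depending only on positions x_i (i ∈ A) and momenta p_j
(j ∈ B) with A and B disjoint, the double Poisson bracket of any coordinate with
Γ vanishes, so the canonical transformation exp(γ{·,Γ}) of the coordinates is
first order in γ. -/
theorem canonical_generator_first_order (I : Type*) [Fintype I] [DecidableEq I]
    (Pb : MvPolynomial (I ⊕ I) ℚ → MvPolynomial (I ⊕ I) ℚ → MvPolynomial (I ⊕ I) ℚ)
    (hPb : ∀ f g, Pb f g = ∑ i : I,
      (pderiv (Sum.inl i) f * pderiv (Sum.inr i) g
        - pderiv (Sum.inr i) f * pderiv (Sum.inl i) g))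
    (A B : Set I) (hAB : A ∩ B = ∅)
    (Γ : MvPolynomial (I ⊕ I) ℚ)
    (hΓ : Γ ∈ Algebra.adjoin ℚ
      ((fun i => X (Sum.inl i : I ⊕ I)) '' A ∪ (fun j => X (Sum.inr j : I ⊕ I)) '' B))
    (v : MvPolynomial (I ⊕ I) ℚ) (hv : ∃ k : I ⊕ I, v = X k) :
    Pb (Pb v Γ) Γ = 0 ∧
    ∀ γ : ℚ, ∀ N : ℕ, 2 ≤ N →
      ∑ k ∈ Finset.range N, (γ ^ k / (k.factorial : ℚ)) • (fun w => Pb w Γ)^[k] v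
        = v + γ • Pb v Γ := by
  -- Γ only depends on x_A and p_B
  have key : (∀ i ∉ A, pderiv (Sum.inl i) Γ = 0) ∧ ∀ j ∉ B, pderiv (Sum.inr j) Γ = 0 := by
    refine Algebra.adjoin_induction ?_ ?_ ?_ ?_ hΓ
    · rintro x (⟨a, ha, rfl⟩ | ⟨b, hb, rfl⟩)
      · exact ⟨fun i hi => pderiv_X_of_ne (by simp; rintro rfl; exact hi ha),
               fun j _ => pderiv_X_of_ne (by simp)⟩
      · exact ⟨fun i _ => pderiv_X_of_ne (by simp),
               fun j hj => pderiv_X_of_ne (by simp; rintro rfl; exact hj hb)⟩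
    · intro r
      constructor <;> intro _ _ <;> simp [MvPolynomial.algebraMap_eq]
    · rintro x y _ _ ⟨hx1, hx2⟩ ⟨hy1, hy2⟩
      exact ⟨fun i hi => by simp [hx1 i hi, hy1 i hi],
             fun j hj => by simp [hx2 j hj, hy2 j hj]⟩
    · rintro x y _ _ ⟨hx1, hx2⟩ ⟨hy1, hy2⟩
      refine ⟨fun i hi => ?_, fun j hj => ?_⟩
      · rw [pderiv_mul, hx1 i hi, hy1 i hi]; ring
      · rw [pderiv_mul, hx2 j hj, hy2 j hj]; ring
  obtain ⟨hA, hB⟩ := key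
  -- any f with the same vanishing property satisfies Pb f Γ = 0
  have main : ∀ f : MvPolynomial (I ⊕ I) ℚ,
      (∀ i ∉ A, pderiv (Sum.inl i) f = 0) → (∀ j ∉ B, pderiv (Sum.inr j) f = 0) →
      Pb f Γ = 0 := by
    intro f hfA hfB
    rw [hPb]
    refine Finset.sum_eq_zero fun i _ => ?_
    have hnot : i ∉ A ∨ i ∉ B := by
      by_contra h
      push_neg at h
      have : i ∈ A ∩ B := ⟨h.1, h.2⟩
      simp [hAB] at this
    have h1 : pderiv (Sum.inl i) f * pderiv (Sum.inr i) Γ = 0 := by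
      rcases em (i ∈ A) with ha | ha
      · rw [hB i (fun hb => by rcases hnot with h | h <;> [exact h ha; exact h hb]), mul_zero]
      · rw [hfA i ha, zero_mul]
    have h2 : pderiv (Sum.inr i) f * pderiv (Sum.inl i) Γ = 0 := by
      rcases em (i ∈ B) with hb | hb
      · rw [hA i (fun ha => by rcases hnot with h | h <;> [exact h ha; exact h hb]), mul_zero]
      · rw [hfB i hb, zero_mul]
    rw [h1, h2, sub_zero]
  obtain ⟨k, rfl⟩ := hv
  have hconst : ∀ c d : I ⊕ I, pderiv c (pderiv d (X k : MvPolynomial (I ⊕ I) ℚ)) = 0 := by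
    intro c d
    rcases em (k = d) with rfl | h
    · rw [pderiv_X_self]; exact pderiv_one
    · rw [pderiv_X_of_ne h, map_zero]
  -- Pb (X k) Γ has the vanishing property
  have hprop1 : ∀ i ∉ A, pderiv (Sum.inl i) (Pb (X k) Γ) = 0 := by
    intro i hi
    rw [hPb, map_sum]
    refine Finset.sum_eq_zero fun m _ => ?_
    rw [map_sub, pderiv_mul, pderiv_mul, hconst, hconst,
      pderiv_comm' (Sum.inl i) (Sum.inr m) Γ, pderiv_comm' (Sum.inl i) (Sum.inl m) Γ,
      hA i hi]
    simp
  have hprop2 : ∀ j ∉ B, pderiv (Sum.inr j) (Pb (X k) Γ) = 0 := by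
    intro j hj
    rw [hPb, map_sum]
    refine Finset.sum_eq_zero fun m _ => ?_
    rw [map_sub, pderiv_mul, pderiv_mul, hconst, hconst,
      pderiv_comm' (Sum.inr j) (Sum.inr m) Γ, pderiv_comm' (Sum.inr j) (Sum.inl m) Γ,
      hB j hj]
    simp
  have h0 : Pb (Pb (X k) Γ) Γ = 0 := main _ hprop1 hprop2
  refine ⟨h0, ?_⟩
  have hz : Pb 0 Γ = 0 := by rw [hPb]; simp
  have hiter : ∀ n : ℕ, 2 ≤ n → (fun w => Pb w Γ)^[n] (X k) = 0 := by
    intro n hn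
    induction n with
    | zero => omega
    | succ m ih =>
      rcases Nat.lt_or_ge m 2 with hm | hm
      · interval_cases m
        · omega
        · simpa [Function.iterate_succ_apply'] using h0
      · rw [Function.iterate_succ_apply', ih hm]
        exact hz
  intro γ N hN
  have hsum : ∑ n ∈ Finset.range N, (γ ^ n / (n.factorial : ℚ)) • (fun w => Pb w Γ)^[n] (X k)
      = ∑ n ∈ Finset.range 2, (γ ^ n / (n.factorial : ℚ)) • (fun w => Pb w Γ)^[n] (X k) := by
    refine (Finset.sum_subset (Finset.range_subset_range.2 hN) ?_).symm
    intro n _ hn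
    simp only [Finset.mem_range, not_lt] at hn
    rw [hiter n hn, smul_zero]
  rw [hsum]
  simp [Finset.sum_range_succ]
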